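/- arXiv:2407.00637 — 2 statements merged into one kernel-verified Lean document; each statement's English description precedes it below -/
import Mathlib

section
/- If a mechanism selects outcome w with probability proportional to exp(ε·u(D,w)/(2Δu)), then it satisfies ε-differential privacy: for neighboring datasets D, D' and any outcome w, Pr[M(D)=w] ≤ exp(ε)·Pr[M(D')=w]. -/
open Finset

lemma exp_ratio_le {Δu ε : ℝ} (hΔ : 0 < Δu) (hε : 0 ≤ ε) {a b : ℝ}
    (h : |a - b| ≤ Δu) :
    Real.exp (ε * a / (2 * Δu)) ≤ Real.exp (ε / 2) * Real.exp (ε * b / (2 * Δu)) := by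
  rw [← Real.exp_add, Real.exp_le_exp]
  have hab : a - b ≤ Δu := (abs_le.mp h).2
  have : ε * a / (2 * Δu) - ε * b / (2 * Δu) ≤ ε / 2 := by
    rw [div_sub_div_same, ← mul_sub]
    rw [div_le_div_iff₀ (by linarith) (by norm_num)]
    nlinarith [mul_le_mul_of_nonneg_left hab hε]
  linarith

/-- The exponential mechanism (every two datasets neighboring, as in local DP)
satisfies ε-DP. -/
theorem exponential_mechanism_dp {Dset Y : Type*} [Fintype Y] [Nonempty Y]
    (u : Dset → Y → ℝ) (Δu ε : ℝ) (hΔ : 0 < Δu) (hε : 0 ≤ ε)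
    (hsens : ∀ (w : Y) (D D' : Dset), |u D w - u D' w| ≤ Δu) :
    ∀ (D D' : Dset) (w : Y),
      Real.exp (ε * u D w / (2 * Δu)) /
          (∑ w' : Y, Real.exp (ε * u D w' / (2 * Δu))) ≤
        Real.exp ε *
          (Real.exp (ε * u D' w / (2 * Δu)) /
            (∑ w' : Y, Real.exp (ε * u D' w' / (2 * Δu)))) := by
  intro D D' w
  set S := ∑ w' : Y, Real.exp (ε * u D w' / (2 * Δu)) with hS
  set T := ∑ w' : Y, Real.exp (ε * u D' w' / (2 * Δu)) with hT
  have hSpos : 0 < S := Finset.sum_pos (fun i _ => Real.exp_pos _) univ_nonempty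
  have hTpos : 0 < T := Finset.sum_pos (fun i _ => Real.exp_pos _) univ_nonempty
  have hnum : Real.exp (ε * u D w / (2 * Δu)) ≤
      Real.exp (ε / 2) * Real.exp (ε * u D' w / (2 * Δu)) :=
    exp_ratio_le hΔ hε (hsens w D D')
  have hden : T ≤ Real.exp (ε / 2) * S := by
    rw [hT, hS, Finset.mul_sum]
    exact Finset.sum_le_sum fun i _ => exp_ratio_le hΔ hε (hsens i D' D)
  rw [mul_div_assoc', div_le_div_iff₀ hSpos hTpos]
  calc Real.exp (ε * u D w / (2 * Δu)) * T
      ≤ (Real.exp (ε / 2) * Real.exp (ε * u D' w / (2 * Δu))) * (Real.exp (ε / 2) * S) :=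
        mul_le_mul hnum hden hTpos.le (by positivity)
    _ = Real.exp ε * Real.exp (ε * u D' w / (2 * Δu)) * S := by
        rw [mul_mul_mul_comm, ← Real.exp_add, add_halves, mul_assoc]
end

section
/- Exponential mechanism utility bound: with probability at least 1 − β, the outcome w sampled by the exponential mechanism with parameter ε over a finite outcome set Y satisfies u(D, w) ≥ max_{w'} u(D, w') − (2Δu/ε)·ln(|Y|/β). -/
open Finset

/-- Utility bound for the exponential mechanism: with probability at least
1 − β, the sampled outcome has utility within (2Δu/ε)·ln(|Y|/β) of the
maximum. -/
theorem exponential_mechanism_utility {Dset Y : Type*} [Fintype Y] [Nonempty Y]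
    (u : Dset → Y → ℝ) (Δu ε β : ℝ) (hΔ : 0 < Δu) (hε : 0 < ε)
    (hβ : 0 < β ∧ β < 1) (D : Dset) :
    1 - β ≤
      (∑ w ∈ Finset.univ.filter (fun w : Y =>
          (Finset.univ.sup' Finset.univ_nonempty (u D)) -
            (2 * Δu / ε) * Real.log ((Fintype.card Y : ℝ) / β) ≤ u D w),
        Real.exp (ε * u D w / (2 * Δu))) /
      (∑ w : Y, Real.exp (ε * u D w / (2 * Δu))) := by
  obtain ⟨hβ0, hβ1⟩ := hβ
  set M := Finset.univ.sup' Finset.univ_nonempty (u D) with hM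
  set c := (2 * Δu / ε) * Real.log ((Fintype.card Y : ℝ) / β) with hc
  set f : Y → ℝ := fun w => Real.exp (ε * u D w / (2 * Δu)) with hf
  have hfpos : ∀ w, 0 < f w := fun w => Real.exp_pos _
  have hS : 0 < ∑ w : Y, f w :=
    Finset.sum_pos (fun w _ => hfpos w) Finset.univ_nonempty
  rw [le_div_iff₀ hS]
  have hsplit :
      (∑ w ∈ Finset.univ.filter (fun w : Y => M - c ≤ u D w), f w) +
        (∑ w ∈ Finset.univ.filter (fun w : Y => ¬ (M - c ≤ u D w)), f w) =
        ∑ w : Y, f w := Finset.sum_filter_add_sum_filter_not _ _ _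
  have hcard : (0 : ℝ) < (Fintype.card Y : ℝ) := by
    exact_mod_cast Fintype.card_pos
  -- key bound on the bad sum
  have hK : ∀ w : Y, ¬ (M - c ≤ u D w) →
      f w ≤ Real.exp (ε * M / (2 * Δu)) * (β / (Fintype.card Y : ℝ)) := by
    intro w hw
    push_neg at hw
    have h1 : f w ≤ Real.exp (ε * (M - c) / (2 * Δu)) := by
      apply Real.exp_le_exp.2
      apply div_le_div_of_nonneg_right _ (by positivity)
      exact mul_le_mul_of_nonneg_left hw.le hε.le
    have h2 : ε * (M - c) / (2 * Δu) =
        ε * M / (2 * Δu) - Real.log ((Fintype.card Y : ℝ) / β) := by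
      rw [hc]; field_simp
    rw [h2, Real.exp_sub, Real.exp_log (by positivity)] at h1
    calc f w ≤ Real.exp (ε * M / (2 * Δu)) / ((Fintype.card Y : ℝ) / β) := h1
      _ = Real.exp (ε * M / (2 * Δu)) * (β / (Fintype.card Y : ℝ)) := by
          field_simp
  have hbad : (∑ w ∈ Finset.univ.filter (fun w : Y => ¬ (M - c ≤ u D w)), f w) ≤
      β * Real.exp (ε * M / (2 * Δu)) := by
    calc (∑ w ∈ Finset.univ.filter (fun w : Y => ¬ (M - c ≤ u D w)), f w)
        ≤ ∑ _w ∈ Finset.univ.filter (fun w : Y => ¬ (M - c ≤ u D w)),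
            Real.exp (ε * M / (2 * Δu)) * (β / (Fintype.card Y : ℝ)) := by
          apply Finset.sum_le_sum
          intro w hw
          exact hK w (Finset.mem_filter.1 hw).2
      _ = ((Finset.univ.filter (fun w : Y => ¬ (M - c ≤ u D w))).card : ℝ) *
            (Real.exp (ε * M / (2 * Δu)) * (β / (Fintype.card Y : ℝ))) := by
          rw [Finset.sum_const, nsmul_eq_mul]
      _ ≤ (Fintype.card Y : ℝ) *
            (Real.exp (ε * M / (2 * Δu)) * (β / (Fintype.card Y : ℝ))) := by
          apply mul_le_mul_of_nonneg_right _ (by positivity)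
          exact_mod_cast Finset.card_filter_le _ _
      _ = β * Real.exp (ε * M / (2 * Δu)) := by field_simp
  have hMle : Real.exp (ε * M / (2 * Δu)) ≤ ∑ w : Y, f w := by
    obtain ⟨w, -, hw⟩ := Finset.exists_mem_eq_sup' Finset.univ_nonempty (u D)
    have : Real.exp (ε * M / (2 * Δu)) = f w := by rw [hf]; simp [hM, ← hw]
    rw [this]
    exact Finset.single_le_sum (fun i _ => (hfpos i).le) (Finset.mem_univ w)
  have hbad' : (∑ w ∈ Finset.univ.filter (fun w : Y => ¬ (M - c ≤ u D w)), f w) ≤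
      β * ∑ w : Y, f w := by
    refine hbad.trans ?_
    exact mul_le_mul_of_nonneg_left hMle hβ0.le
  nlinarith [hsplit, hbad']
end
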